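/- Let Γ be a connected finite simplicial graph. Then for every vertex w there exists a vertex v whose equivalence class [v] is maximal and such that w ∈ [v] ∪ lk(v) (i.e. w lies in the join J_[v] associated to [v]). -/

import Mathlib

/-!
Unless `Γ` is a single vertex, connectedness gives `w` a neighbour `y`, and finiteness gives a
maximal class `[m]` above `y`. Then `w ∈ lk(y) ⊆ st(m)`, and every vertex of `st(m)` lies in
`J_[m]`.
-/

open SimpleGraph

namespace RaagPaper

variable {V : Type*}

/-- The link of a vertex: the set of vertices adjacent to it. -/
def lk (G : SimpleGraph V) (v : V) : Set V := G.neighborSet v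

/-- The (closed) star of a vertex: `st(v) = lk(v) ∪ {v}`. -/
def st (G : SimpleGraph V) (v : V) : Set V := insert v (G.neighborSet v)

/-- The preorder on vertices: `v ≤ w` iff `lk(v) ⊆ st(w)`. -/
def vle (G : SimpleGraph V) (v w : V) : Prop := lk G v ⊆ st G w

/-- Equivalence of vertices: `v ∼ w` iff `v ≤ w` and `w ≤ v`. -/
def vequiv (G : SimpleGraph V) (v w : V) : Prop := vle G v w ∧ vle G w v

/-- The equivalence class `[v]` of a vertex `v`. -/
def cls (G : SimpleGraph V) (v : V) : Set V := {u | vequiv G u v}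

/-- `[v]` is maximal with respect to the partial order induced by `≤`. -/
def IsMaximalClass (G : SimpleGraph V) (v : V) : Prop := ∀ w, vle G v w → vle G w v

/-- `L_[v] = lk(v) \ [v]`. -/
def Lset (G : SimpleGraph V) (v : V) : Set V := lk G v \ cls G v

/-- `J_[v] = [v] ∪ L_[v]`, the join associated to `[v]`. -/
def Jset (G : SimpleGraph V) (v : V) : Set V := cls G v ∪ Lset G v

/-- `v ∈ V_ab` : any two distinct vertices of `[v]` are adjacent (so `A_[v]` is abelian). -/
def Vab (G : SimpleGraph V) (v : V) : Prop :=
  ∀ x ∈ cls G v, ∀ y ∈ cls G v, x ≠ y → G.Adj x y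

section

variable {G : SimpleGraph V}

theorem vle_refl (v : V) : vle G v v :=
  Set.subset_insert v _

theorem vle_trans {a b c : V} (hab : vle G a b) (hbc : vle G b c) : vle G a c := by
  intro u hau
  rcases hab hau with rfl | hbu
  · rcases hbc (G.adj_symm hau) with rfl | hca
    · exact Set.mem_insert_of_mem _ hau
    · rcases hab (G.adj_symm hca) with rfl | huc
      · exact Set.mem_insert _ _
      · exact Set.mem_insert_of_mem _ (G.adj_symm huc)
  · exact hbc hbu

theorem mem_cls_self (v : V) : v ∈ cls G v :=
  ⟨vle_refl v, vle_refl v⟩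

theorem mem_Jset_of_mem_st {v w : V} (hw : w ∈ st G v) : w ∈ Jset G v := by
  by_cases hcls : w ∈ cls G v
  · exact Or.inl hcls
  · rcases hw with rfl | hvw
    · exact absurd (mem_cls_self w) hcls
    · exact Or.inr ⟨hvw, hcls⟩

end

/-- A vertex `m` above `u` whose down-set `{x | x ≤ m}` is as large as possible is maximal: if
`m ≤ w`, the down-set of `w` contains that of `m`, hence equals it, so it contains `w`. -/
theorem exists_isMaximalClass_vle [Fintype V] (G : SimpleGraph V) (u : V) :
    ∃ m, IsMaximalClass G m ∧ vle G u m := by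
  classical
  let downSet : V → Finset V := fun m => {x | vle G x m}
  obtain ⟨m, hum, hmax⟩ := Finset.exists_max_image {x | vle G u x} (fun m => (downSet m).card)
    ⟨u, by simp [vle_refl]⟩
  simp only [Finset.mem_filter, Finset.mem_univ, true_and] at hum hmax
  refine ⟨m, fun w hmw => ?_, hum⟩
  have hsub : downSet m ⊆ downSet w := by
    intro x hx
    simp only [downSet, Finset.mem_filter, Finset.mem_univ, true_and] at hx ⊢
    exact vle_trans hx hmw
  have heq : downSet m = downSet w :=
    Finset.eq_of_subset_of_card_le hsub (hmax w (vle_trans hum hmw))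
  have hw : w ∈ downSet w := by simp [downSet, vle_refl]
  rw [← heq] at hw
  simpa [downSet] using hw

theorem mem_join_of_maximal_general {V : Type*} [Fintype V] (G : SimpleGraph V)
    (hconn : G.Connected) (w : V) :
    ∃ v : V, IsMaximalClass G v ∧ w ∈ Jset G v := by
  rcases subsingleton_or_nontrivial V with hV | hV
  · refine ⟨w, fun x _ => ?_, Or.inl (mem_cls_self w)⟩
    rw [Subsingleton.elim x w]
    exact vle_refl w
  · obtain ⟨y, hwy⟩ : ∃ y, G.Adj w y := by
      simpa [IsIsolated] using hconn.preconnected.not_isIsolated w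
    obtain ⟨m, hm, hym⟩ := exists_isMaximalClass_vle G y
    exact ⟨m, hm, mem_Jset_of_mem_st (hym (G.adj_symm hwy))⟩

/-- every vertex `w` lies in the join `J_[v]` associated to some maximal class `[v]`. -/
theorem mem_join_of_maximal {V : Type*} [Fintype V] [Nonempty V] (G : SimpleGraph V)
    (hconn : G.Connected) (w : V) :
    ∃ v : V, IsMaximalClass G v ∧ w ∈ Jset G v :=
  mem_join_of_maximal_general G hconn w

end RaagPaper
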